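/- Let Λ̄ = diag(λ_2,...,λ_n) with λ_i > 0 be the diagonal matrix of nonzero Laplacian eigenvalues, and let X̄ > 0 solve −Λ̄X̄ − X̄Λ̄ + F̄F̄ᵀ = 0 and Ȳ > 0 (block-diagonal conforming to repeated eigenvalues of Λ̄) satisfy −Λ̄Ȳ − ȲΛ̄ + H̄ᵀH̄ ≤ 0. If K_M > 0 satisfies AᵀK_M + K_M A ≤ 0, Cᵀ = K_M B, and K_m > 0 likewise, then 𝒳 := X̄ ⊗ K_M^{-1} and 𝒴 := Ȳ ⊗ K_m are generalized controllability and observability Gramians of the system (I⊗A − Λ̄⊗BC, F̄⊗B, H̄⊗C), i.e., (I⊗A − Λ̄⊗BC)𝒳 + 𝒳(I⊗A − Λ̄⊗BC)ᵀ + (F̄⊗B)(F̄⊗B)ᵀ ≤ 0 and (I⊗A − Λ̄⊗BC)ᵀ𝒴 + 𝒴(I⊗A − Λ̄⊗BC) + (H̄⊗C)ᵀ(H̄⊗C) ≤ 0. -/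

import Mathlib

/-!
Substituting `Cᵀ = K B`, the observability expression splits as
`Y ⊗ (AᵀK + KA) − (ΛY + YΛ − HᵀH) ⊗ CᵀC`, so its negative is a sum of Kronecker products of
positive semidefinite matrices. The controllability statement is the observability one for the
dual network `(Λ, Aᵀ, Cᵀ, Bᵀ)`, which is passive with certificate `K⁻¹`.
-/

open Matrix Kronecker

namespace Matrix

variable {α l m n p : Type*}

theorem sub_kronecker [NonUnitalNonAssocRing α] (A₁ A₂ : Matrix l m α) (B : Matrix n p α) :
    (A₁ - A₂) ⊗ₖ B = A₁ ⊗ₖ B - A₂ ⊗ₖ B := by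
  ext ⟨⟩ ⟨⟩
  simp [sub_mul]

theorem kronecker_neg [NonUnitalNonAssocRing α] (A : Matrix l m α) (B : Matrix n p α) :
    A ⊗ₖ (-B) = -(A ⊗ₖ B) := by
  ext ⟨⟩ ⟨⟩
  simp

end Matrix

variable {ι κ μ ν ρ : Type*}

def networkMatrix [DecidableEq ι] [Fintype μ] (L : Matrix ι ι ℝ) (A : Matrix κ κ ℝ)
    (B : Matrix κ μ ℝ) (C : Matrix μ κ ℝ) : Matrix (ι × κ) (ι × κ) ℝ :=
  1 ⊗ₖ A - L ⊗ₖ (B * C)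

theorem networkMatrix_transpose [DecidableEq ι] [Fintype μ] (L : Matrix ι ι ℝ)
    (A : Matrix κ κ ℝ) (B : Matrix κ μ ℝ) (C : Matrix μ κ ℝ) :
    (networkMatrix L A B C)ᵀ = networkMatrix Lᵀ Aᵀ Cᵀ Bᵀ := by
  rw [networkMatrix, networkMatrix, transpose_sub, ← kroneckerMap_transpose,
    ← kroneckerMap_transpose, transpose_one, transpose_mul]

structure IsPassivityCertificate [Fintype κ] (A : Matrix κ κ ℝ) (B : Matrix κ μ ℝ)
    (C : Matrix μ κ ℝ) (K : Matrix κ κ ℝ) : Prop where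
  transpose_eq : Kᵀ = K
  lyapunov : (-(Aᵀ * K + K * A)).PosSemidef
  output_eq : Cᵀ = K * B

namespace IsPassivityCertificate

variable [Fintype κ] {A : Matrix κ κ ℝ} {B : Matrix κ μ ℝ} {C : Matrix μ κ ℝ}
  {K : Matrix κ κ ℝ}

theorem output_eq_transpose_mul (hK : IsPassivityCertificate A B C K) : C = Bᵀ * K := by
  simpa [transpose_mul, hK.transpose_eq] using congrArg transpose hK.output_eq

theorem inv_dual [DecidableEq κ] (hK : IsPassivityCertificate A B C K) (hKpos : K.PosDef) :
    IsPassivityCertificate Aᵀ Cᵀ Bᵀ K⁻¹ := by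
  have hdet : IsUnit K.det := hKpos.det_pos.ne'.isUnit
  have hKinv : (K⁻¹)ᴴ = K⁻¹ := hKpos.isHermitian.inv
  refine ⟨by simpa using hKinv, ?_, ?_⟩
  · have hconj :
        -((Aᵀ)ᵀ * K⁻¹ + K⁻¹ * Aᵀ) = K⁻¹ * -(Aᵀ * K + K * A) * (K⁻¹)ᴴ := by
      rw [hKinv, mul_neg, neg_mul, mul_add, add_mul, ← mul_assoc, mul_assoc _ K,
        mul_nonsing_inv K hdet, ← mul_assoc K⁻¹ K, nonsing_inv_mul K hdet, mul_one, one_mul,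
        transpose_transpose, add_comm]
    rw [hconj]
    exact hK.lyapunov.mul_mul_conjTranspose_same K⁻¹
  · rw [transpose_transpose, hK.output_eq, ← Matrix.mul_assoc, nonsing_inv_mul K hdet,
      Matrix.one_mul]

theorem networkMatrix_lyapunov_eq [Fintype ι] [DecidableEq ι] [Fintype μ] [Fintype ν]
    (hK : IsPassivityCertificate A B C K) (L Y : Matrix ι ι ℝ) (H : Matrix ν ι ℝ) :
    (networkMatrix L A B C)ᵀ * (Y ⊗ₖ K) + (Y ⊗ₖ K) * networkMatrix L A B C
        + (H ⊗ₖ C)ᵀ * (H ⊗ₖ C)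
      = Y ⊗ₖ (Aᵀ * K + K * A) - (Lᵀ * Y + Y * L - Hᵀ * H) ⊗ₖ (Cᵀ * C) := by
  have hleft : Cᵀ * Bᵀ * K = Cᵀ * C := by
    rw [Matrix.mul_assoc, ← hK.output_eq_transpose_mul]
  have hright : K * (B * C) = Cᵀ * C := by rw [← Matrix.mul_assoc, ← hK.output_eq]
  rw [networkMatrix_transpose, networkMatrix, networkMatrix, sub_mul, mul_sub,
    ← kroneckerMap_transpose, ← mul_kronecker_mul, ← mul_kronecker_mul, ← mul_kronecker_mul,
    ← mul_kronecker_mul, ← mul_kronecker_mul, one_mul, mul_one, hleft, hright, kronecker_add,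
    sub_kronecker, add_kronecker]
  abel

theorem observability_gramian [Fintype ι] [DecidableEq ι] [Fintype μ] [Fintype ν]
    (hK : IsPassivityCertificate A B C K) {L Y : Matrix ι ι ℝ} {H : Matrix ν ι ℝ}
    (hY : Y.PosSemidef) (hLY : (Lᵀ * Y + Y * L - Hᵀ * H).PosSemidef) :
    (-((networkMatrix L A B C)ᵀ * (Y ⊗ₖ K) + (Y ⊗ₖ K) * networkMatrix L A B C
        + (H ⊗ₖ C)ᵀ * (H ⊗ₖ C))).PosSemidef := by
  rw [hK.networkMatrix_lyapunov_eq, neg_sub, sub_eq_add_neg, ← kronecker_neg]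
  exact (hLY.kronecker (by simpa using posSemidef_conjTranspose_mul_self C)).add
    (hY.kronecker hK.lyapunov)

theorem controllability_gramian [Fintype ι] [DecidableEq ι] [DecidableEq κ] [Fintype μ]
    [Fintype ρ] (hK : IsPassivityCertificate A B C K) (hKpos : K.PosDef) {L X : Matrix ι ι ℝ}
    {F : Matrix ι ρ ℝ} (hX : X.PosSemidef) (hLX : (L * X + X * Lᵀ - F * Fᵀ).PosSemidef) :
    (-(networkMatrix L A B C * (X ⊗ₖ K⁻¹) + (X ⊗ₖ K⁻¹) * (networkMatrix L A B C)ᵀ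
        + (F ⊗ₖ B) * (F ⊗ₖ B)ᵀ)).PosSemidef := by
  have hdual := (hK.inv_dual hKpos).observability_gramian (L := Lᵀ) (H := Fᵀ) hX
    (by simpa only [transpose_transpose] using hLX)
  simpa only [← networkMatrix_transpose, transpose_transpose, kroneckerMap_transpose]
    using hdual

end IsPassivityCertificate

theorem network_generalized_gramians_general {N p q ℓ mm : ℕ}
    (lam : Fin N → ℝ)
    (F : Matrix (Fin N) (Fin p) ℝ) (H : Matrix (Fin q) (Fin N) ℝ)
    (A : Matrix (Fin ℓ) (Fin ℓ) ℝ)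
    (B : Matrix (Fin ℓ) (Fin mm) ℝ) (C : Matrix (Fin mm) (Fin ℓ) ℝ)
    (KM Km : Matrix (Fin ℓ) (Fin ℓ) ℝ)
    (hKM : KM.PosDef) (hKMsym : KMᵀ = KM)
    (hKMlyap : (-(Aᵀ * KM + KM * A)).PosSemidef) (hKMCB : Cᵀ = KM * B)
    (hKmsym : Kmᵀ = Km)
    (hKmlyap : (-(Aᵀ * Km + Km * A)).PosSemidef) (hKmCB : Cᵀ = Km * B)
    (X Y : Matrix (Fin N) (Fin N) ℝ)
    (hX : X.PosDef)
    (hY : Y.PosDef)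
    (hXeq : -(Matrix.diagonal lam * X) - X * Matrix.diagonal lam + F * Fᵀ = 0)
    (hYineq : (Matrix.diagonal lam * Y + Y * Matrix.diagonal lam - Hᵀ * H).PosSemidef) :
    (-(((1 : Matrix (Fin N) (Fin N) ℝ) ⊗ₖ A - Matrix.diagonal lam ⊗ₖ (B * C)) * (X ⊗ₖ KM⁻¹)
        + (X ⊗ₖ KM⁻¹) * ((1 : Matrix (Fin N) (Fin N) ℝ) ⊗ₖ A - Matrix.diagonal lam ⊗ₖ (B * C))ᵀ
        + (F ⊗ₖ B) * (F ⊗ₖ B)ᵀ)).PosSemidef ∧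
    (-(((1 : Matrix (Fin N) (Fin N) ℝ) ⊗ₖ A - Matrix.diagonal lam ⊗ₖ (B * C))ᵀ * (Y ⊗ₖ Km)
        + (Y ⊗ₖ Km) * ((1 : Matrix (Fin N) (Fin N) ℝ) ⊗ₖ A - Matrix.diagonal lam ⊗ₖ (B * C))
        + (H ⊗ₖ C)ᵀ * (H ⊗ₖ C))).PosSemidef := by
  have hXzero : diagonal lam * X + X * (diagonal lam)ᵀ - F * Fᵀ = 0 := by
    rw [diagonal_transpose, ← neg_eq_zero, ← hXeq]
    abel
  refine ⟨?_, ?_⟩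
  · exact IsPassivityCertificate.controllability_gramian ⟨hKMsym, hKMlyap, hKMCB⟩ hKM
      hX.posSemidef (hXzero ▸ PosSemidef.zero)
  · exact IsPassivityCertificate.observability_gramian ⟨hKmsym, hKmlyap, hKmCB⟩ hY.posSemidef
      (by rwa [diagonal_transpose])

/-- For a positive diagonal `Λ̄` of nonzero Laplacian eigenvalues, `X̄ > 0` solving
`−Λ̄X̄ − X̄Λ̄ + F̄F̄ᵀ = 0`, and block-diagonal `Ȳ > 0` (conforming to the repeated
eigenvalues of `Λ̄`) with `−Λ̄Ȳ − ȲΛ̄ + H̄ᵀH̄ ≤ 0`, and passivity certificates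
`K_M, K_m` of `(A,B,C)`, the matrices `𝒳 = X̄ ⊗ K_M⁻¹` and `𝒴 = Ȳ ⊗ K_m` are
generalized controllability and observability Gramians of
`(I ⊗ A − Λ̄ ⊗ BC, F̄ ⊗ B, H̄ ⊗ C)`. -/
theorem network_generalized_gramians {N p q ℓ mm : ℕ}
    (lam : Fin N → ℝ) (hlam : ∀ i, 0 < lam i)
    (F : Matrix (Fin N) (Fin p) ℝ) (H : Matrix (Fin q) (Fin N) ℝ)
    (A : Matrix (Fin ℓ) (Fin ℓ) ℝ)
    (B : Matrix (Fin ℓ) (Fin mm) ℝ) (C : Matrix (Fin mm) (Fin ℓ) ℝ)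
    (KM Km : Matrix (Fin ℓ) (Fin ℓ) ℝ)
    (hKM : KM.PosDef) (hKMsym : KMᵀ = KM)
    (hKMlyap : (-(Aᵀ * KM + KM * A)).PosSemidef) (hKMCB : Cᵀ = KM * B)
    (hKm : Km.PosDef) (hKmsym : Kmᵀ = Km)
    (hKmlyap : (-(Aᵀ * Km + Km * A)).PosSemidef) (hKmCB : Cᵀ = Km * B)
    (X Y : Matrix (Fin N) (Fin N) ℝ)
    (hX : X.PosDef) (hXsym : Xᵀ = X)
    (hY : Y.PosDef) (hYsym : Yᵀ = Y)
    (hYblock : ∀ i j, Y i j ≠ 0 → lam i = lam j)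
    (hXeq : -(Matrix.diagonal lam * X) - X * Matrix.diagonal lam + F * Fᵀ = 0)
    (hYineq : (Matrix.diagonal lam * Y + Y * Matrix.diagonal lam - Hᵀ * H).PosSemidef) :
    (-(((1 : Matrix (Fin N) (Fin N) ℝ) ⊗ₖ A - Matrix.diagonal lam ⊗ₖ (B * C)) * (X ⊗ₖ KM⁻¹)
        + (X ⊗ₖ KM⁻¹) * ((1 : Matrix (Fin N) (Fin N) ℝ) ⊗ₖ A - Matrix.diagonal lam ⊗ₖ (B * C))ᵀ
        + (F ⊗ₖ B) * (F ⊗ₖ B)ᵀ)).PosSemidef ∧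
    (-(((1 : Matrix (Fin N) (Fin N) ℝ) ⊗ₖ A - Matrix.diagonal lam ⊗ₖ (B * C))ᵀ * (Y ⊗ₖ Km)
        + (Y ⊗ₖ Km) * ((1 : Matrix (Fin N) (Fin N) ℝ) ⊗ₖ A - Matrix.diagonal lam ⊗ₖ (B * C))
        + (H ⊗ₖ C)ᵀ * (H ⊗ₖ C))).PosSemidef :=
  network_generalized_gramians_general lam F H A B C KM Km hKM hKMsym hKMlyap hKMCB hKmsym hKmlyap
    hKmCB X Y hX hY hXeq hYineq
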